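/- arXiv:math/0604628 — 2 statements merged into one kernel-verified Lean document; each statement's English description precedes it below -/
import Mathlib

section
/- Let P be a finite partially ordered set and let x, y ∈ P be distinct elements such that y dominates x. Then the order complex Δ(P) LC-reduces to the order complex Δ(P \ {x}). -/
open Finset Function

variable {V : Type} [Fintype V] [DecidableEq V]

/-- A collection of finite sets closed under taking subsets: an abstract simplicial
complex on its own vertex set. -/
def DownClosed (Δ : Finset (Finset V)) : Prop :=
  ∀ S ∈ Δ, ∀ T ⊆ S, T ∈ Δ

/-- The vertex set of a complex: those `v` with `{v}` a face. -/
def verts (Δ : Finset (Finset V)) : Finset V :=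
  Finset.univ.filter fun v => ({v} : Finset V) ∈ Δ

/-- `F` is a facet of `Δ`, i.e. a face maximal under inclusion. -/
def IsFacet (Δ : Finset (Finset V)) (F : Finset V) : Prop :=
  F ∈ Δ ∧ ∀ G ∈ Δ, F ⊆ G → F = G

/-- `F(v)`: the set of facets of `Δ` containing the vertex `v`. -/
def facetsOf (Δ : Finset (Finset V)) (v : V) : Set (Finset V) :=
  {F | IsFacet Δ F ∧ v ∈ F}

/-- `κ` restricts to a surjective `k`-linear coloring of the vertex set of `Δ`:
every color is used on some vertex of `Δ`, and vertices of `Δ` with the same color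
have facet sets comparable by inclusion. -/
def IsLinearOn {k : ℕ} (Δ : Finset (Finset V)) (κ : V → Fin k) : Prop :=
  (∀ i : Fin k, ∃ v ∈ verts Δ, κ v = i) ∧
  ∀ u ∈ verts Δ, ∀ v ∈ verts Δ, κ u = κ v →
    facetsOf Δ u ⊆ facetsOf Δ v ∨ facetsOf Δ v ⊆ facetsOf Δ u

/-- `Δ'` is a representative subcomplex of `Δ` with respect to the linear coloring `κ`
of `Δ`: `Δ'` is a subcomplex with exactly one vertex of each color, and whenever a
vertex `x` of `Δ` has the same color as a vertex `y` of `Δ'`, `F(x) ⊆ F(y)`. -/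
def IsRepSub {k : ℕ} (Δ Δ' : Finset (Finset V)) (κ : V → Fin k) : Prop :=
  Δ' ⊆ Δ ∧ DownClosed Δ' ∧ IsLinearOn Δ κ ∧
  (∀ i : Fin k, ∃! y : V, y ∈ verts Δ' ∧ κ y = i) ∧
  ∀ x ∈ verts Δ, ∀ y ∈ verts Δ', κ x = κ y → facetsOf Δ x ⊆ facetsOf Δ y

/-- `Δ` LC-reduces to `Δ'`: there is a chain of subcomplexes from `Δ` to `Δ'` in which
each term is a representative subcomplex of the previous one with respect to some
linear coloring. -/
def LCReduces (Δ Δ' : Finset (Finset V)) : Prop :=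
  ∃ (t : ℕ) (c : ℕ → Finset (Finset V)), c 0 = Δ ∧ c t = Δ' ∧
    ∀ r < t, ∃ (k : ℕ) (κ : V → Fin k), IsRepSub (c r) (c (r + 1)) κ

open scoped Classical in
/-- The order complex of the subset `A` of a finite poset: its faces are the
finite chains contained in `A`. -/
noncomputable def orderCpx {P : Type} [Fintype P] [DecidableEq P] [PartialOrder P]
    (A : Finset P) : Finset (Finset P) :=
  A.powerset.filter fun S => IsChain (· ≤ ·) (S : Set P)

/-!
All facets of `Δ(P)` through `x` also pass through `y`: a maximal chain containing `x` stays a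
chain when `y` is added, since everything comparable with `x` is comparable with `y`. Colouring
`x` like `y` and every other vertex by itself is then a linear colouring of `Δ(P)`, and the
deletion of `x`, which is `Δ(P \ {x})`, is a representative subcomplex for it.
-/

def deletion (Δ : Finset (Finset V)) (x : V) : Finset (Finset V) :=
  Δ.filter fun S => x ∉ S

theorem mem_verts {Δ : Finset (Finset V)} {v : V} : v ∈ verts Δ ↔ {v} ∈ Δ := by
  simp [verts]

theorem verts_deletion (Δ : Finset (Finset V)) (x : V) :
    verts (deletion Δ x) = (verts Δ).erase x := by
  ext v
  simp [mem_verts, deletion, and_comm, eq_comm]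

theorem DownClosed.deletion {α : Type} [DecidableEq α] {Δ : Finset (Finset α)}
    (hΔ : DownClosed Δ) (x : α) :
    DownClosed (deletion Δ x) := by
  intro S hS T hTS
  simp only [_root_.deletion, mem_filter] at hS ⊢
  exact ⟨hΔ S hS.1 T hTS, fun hxT => hS.2 (hTS hxT)⟩

theorem LCReduces.of_isRepSub {k : ℕ} {Δ Δ' : Finset (Finset V)} {κ : V → Fin k}
    (h : IsRepSub Δ Δ' κ) : LCReduces Δ Δ' := by
  refine ⟨1, fun r => if r = 0 then Δ else Δ', by simp, by simp, fun r hr => ?_⟩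
  obtain rfl : r = 0 := by omega
  exact ⟨k, κ, h⟩

theorem exists_fin_coloring_collapse_compl {α : Type*} {W : Finset α} {y : α} (hy : y ∈ W) :
    ∃ κ : α → Fin #W, (∀ i, ∃! w, w ∈ W ∧ κ w = i) ∧ ∀ u ∉ W, κ u = κ y := by
  classical
  let r : α → W := fun v => if hv : v ∈ W then ⟨v, hv⟩ else ⟨y, hy⟩
  refine ⟨fun v => W.equivFin (r v), fun i => ⟨W.equivFin.symm i, ?_, ?_⟩, ?_⟩
  · simp [r]
  · rintro w ⟨hw, rfl⟩
    simp [r, hw]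
  · intro u hu
    simp [r, hu, hy]

theorem exists_isRepSub_deletion {Δ : Finset (Finset V)} (hΔ : DownClosed Δ) {x y : V}
    (hxy : x ≠ y) (hy : y ∈ verts Δ) (hF : facetsOf Δ x ⊆ facetsOf Δ y) :
    ∃ (k : ℕ) (κ : V → Fin k), IsRepSub Δ (deletion Δ x) κ := by
  set W := verts (deletion Δ x) with hW
  have hyW : y ∈ W := by simp [W, verts_deletion, hy, hxy.symm]
  have hWΔ : ∀ {v}, v ∈ W → v ∈ verts Δ := fun hv =>
    mem_of_mem_erase (by rwa [hW, verts_deletion] at hv)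
  have hnotW : ∀ {v}, v ∈ verts Δ → v ∉ W → v = x := fun hv hvW => by
    by_contra hvx
    exact hvW (by simp [W, verts_deletion, hv, hvx])
  obtain ⟨κ, hκW, hκy⟩ := exists_fin_coloring_collapse_compl hyW
  have hrep : ∀ u ∈ verts Δ, ∀ v ∈ W, κ u = κ v → facetsOf Δ u ⊆ facetsOf Δ v := by
    intro u hu v hv huv
    by_cases huW : u ∈ W
    · rw [(hκW (κ v)).unique ⟨huW, huv⟩ ⟨hv, rfl⟩]
    · obtain rfl := hnotW hu huW
      rwa [(hκW (κ y)).unique ⟨hv, (huv.symm.trans (hκy _ huW))⟩ ⟨hyW, rfl⟩]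
  refine ⟨#W, κ, filter_subset _ _, hΔ.deletion x, ⟨fun i => ?_, ?_⟩, hκW, hrep⟩
  · obtain ⟨w, ⟨hw, hwi⟩, -⟩ := hκW i
    exact ⟨w, hWΔ hw, hwi⟩
  · intro u hu v hv huv
    by_cases hvW : v ∈ W
    · exact Or.inl (hrep u hu v hvW huv)
    by_cases huW : u ∈ W
    · exact Or.inr (hrep v hv u huW huv.symm)
    · rw [hnotW hu huW, hnotW hv hvW]
      exact Or.inl le_rfl

section OrderComplex

variable {P : Type} [Fintype P] [DecidableEq P] [PartialOrder P]

theorem mem_orderCpx {A S : Finset P} :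
    S ∈ orderCpx A ↔ S ⊆ A ∧ IsChain (· ≤ ·) (S : Set P) := by
  simp [orderCpx]

theorem downClosed_orderCpx (A : Finset P) : DownClosed (orderCpx A) := by
  intro S hS T hTS
  rw [mem_orderCpx] at hS ⊢
  exact ⟨hTS.trans hS.1, hS.2.mono (coe_subset.mpr hTS)⟩

theorem mem_verts_orderCpx {A : Finset P} {v : P} : v ∈ verts (orderCpx A) ↔ v ∈ A := by
  simp [mem_verts, mem_orderCpx, Set.subsingleton_singleton.isChain]

theorem orderCpx_erase (A : Finset P) (x : P) :
    orderCpx (A.erase x) = deletion (orderCpx A) x := by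
  ext S
  simp only [deletion, mem_filter, mem_orderCpx, subset_erase]
  tauto

theorem facetsOf_orderCpx_subset_of_dominates {A : Finset P} {x y : P} (hy : y ∈ A)
    (hdom : ∀ z ∈ A, (z ≤ x ∨ x ≤ z) → (z ≤ y ∨ y ≤ z)) :
    facetsOf (orderCpx A) x ⊆ facetsOf (orderCpx A) y := by
  rintro F ⟨⟨hFmem, hFmax⟩, hxF⟩
  obtain ⟨hFA, hchain⟩ := mem_orderCpx.mp hFmem
  have hinsert : insert y F ∈ orderCpx A := by
    refine mem_orderCpx.mpr ⟨insert_subset hy hFA, ?_⟩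
    rw [coe_insert]
    refine hchain.insert fun z hz _ => (hdom z (hFA hz) ?_).symm
    obtain rfl | hzx := eq_or_ne z x
    · exact Or.inl le_rfl
    · exact hchain hz hxF hzx
  refine ⟨⟨hFmem, hFmax⟩, ?_⟩
  rw [hFmax _ hinsert (subset_insert y F)]
  exact mem_insert_self y F

end OrderComplex

/-- If `y` dominates `x` in a finite poset `P`, then the order complex of `P`
LC-reduces to the order complex of `P \ {x}`. -/
theorem stmt_16 {P : Type} [Fintype P] [DecidableEq P] [PartialOrder P]
    (x y : P) (hxy : x ≠ y)
    (hdom : ∀ z : P, (z ≤ x ∨ x ≤ z) → (z ≤ y ∨ y ≤ z)) :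
    LCReduces (orderCpx (Finset.univ : Finset P))
      (orderCpx ((Finset.univ : Finset P).erase x)) := by
  have hF := facetsOf_orderCpx_subset_of_dominates (mem_univ y) fun z _ => hdom z
  obtain ⟨k, κ, hrep⟩ := exists_isRepSub_deletion (downClosed_orderCpx univ) hxy
    (mem_verts_orderCpx.mpr (mem_univ y)) hF
  rw [orderCpx_erase]
  exact LCReduces.of_isRepSub hrep
end

section
/- Let G be a finite simple graph on a vertex set V in which every vertex has at least one neighbor, let N(G) be its neighborhood complex, and let κ : V → {1,…,k} be a k-linear coloring of N(G). Then κ is a proper vertex coloring of G: for every edge {x, y} of G, κ(x) ≠ κ(y). -/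
open Finset Function

variable {V : Type} [Fintype V] [DecidableEq V]

/-- A finite abstract simplicial complex on the vertex set `V`: a collection of
finite subsets of `V` closed under taking subsets, containing every singleton. -/
def IsComplex (Δ : Finset (Finset V)) : Prop :=
  (∀ S ∈ Δ, ∀ T ⊆ S, T ∈ Δ) ∧ ∀ v : V, ({v} : Finset V) ∈ Δ

/-- A surjective map `κ : V → {1,…,k}` is a `k`-linear coloring of `Δ` if for every
pair of vertices with the same color the facet sets are comparable by inclusion. -/
def IsLinearColoring {k : ℕ} (Δ : Finset (Finset V)) (κ : V → Fin k) : Prop :=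
  Surjective κ ∧
  ∀ u v : V, κ u = κ v →
    facetsOf Δ u ⊆ facetsOf Δ v ∨ facetsOf Δ v ⊆ facetsOf Δ u

open scoped Classical in
/-- The neighborhood complex of a graph `G`: faces are the sets of vertices
having a common neighbor. -/
noncomputable def nbrCpx (G : SimpleGraph V) : Finset (Finset V) :=
  (Finset.univ : Finset (Finset V)).filter fun S => ∃ z : V, ∀ v ∈ S, G.Adj z v

lemma isFacet_iff_maximal {α : Type} {Δ : Finset (Finset α)} {F : Finset α} :
    IsFacet Δ F ↔ Maximal (· ∈ Δ) F :=
  and_congr_right fun _ =>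
    forall₂_congr fun _ _ => imp_congr_right fun hFG => ⟨ge_of_eq, hFG.antisymm⟩

lemma exists_isFacet_superset {α : Type} {Δ : Finset (Finset α)} {S : Finset α} (hS : S ∈ Δ) :
    ∃ F, S ⊆ F ∧ IsFacet Δ F := by
  simpa only [isFacet_iff_maximal] using Δ.exists_le_maximal hS

lemma mem_nbrCpx {G : SimpleGraph V} {S : Finset V} :
    S ∈ nbrCpx G ↔ ∃ z, ∀ v ∈ S, G.Adj z v := by
  simp [nbrCpx]

/-- Take a facet `F ⊇ N(y)`. If `y ∈ F`, a common neighbour `z` of `F` would be a neighbour of `y`,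
hence lie in `F`, hence be adjacent to itself. -/
lemma exists_isFacet_mem_notMem_of_adj {G : SimpleGraph V} {x y : V} (hxy : G.Adj x y) :
    ∃ F, IsFacet (nbrCpx G) F ∧ x ∈ F ∧ y ∉ F := by
  classical
  have hNy : G.neighborFinset y ∈ nbrCpx G :=
    mem_nbrCpx.2 ⟨y, fun v hv => (G.mem_neighborFinset y v).1 hv⟩
  obtain ⟨F, hNyF, hF⟩ := exists_isFacet_superset hNy
  refine ⟨F, hF, hNyF ((G.mem_neighborFinset y x).2 hxy.symm), fun hyF => ?_⟩
  obtain ⟨z, hz⟩ := mem_nbrCpx.1 hF.1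
  have hzF : z ∈ F := hNyF ((G.mem_neighborFinset y z).2 (hz y hyF).symm)
  exact G.irrefl (hz z hzF)

lemma facetsOf_nbrCpx_not_subset_of_adj {G : SimpleGraph V} {x y : V} (hxy : G.Adj x y) :
    ¬ facetsOf (nbrCpx G) x ⊆ facetsOf (nbrCpx G) y := fun hsub =>
  let ⟨_, hF, hxF, hyF⟩ := exists_isFacet_mem_notMem_of_adj hxy
  hyF (hsub ⟨hF, hxF⟩).2

theorem stmt_19_general (G : SimpleGraph V)
    {k : ℕ} (κ : V → Fin k) (hκ : IsLinearColoring (nbrCpx G) κ) :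
    ∀ x y : V, G.Adj x y → κ x ≠ κ y := by
  intro x y hxy hκxy
  rcases hκ.2 x y hκxy with hsub | hsub
  · exact facetsOf_nbrCpx_not_subset_of_adj hxy hsub
  · exact facetsOf_nbrCpx_not_subset_of_adj hxy.symm hsub

/-- A linear coloring of the neighborhood complex of a graph is a proper vertex
coloring of the graph. -/
theorem stmt_19 (G : SimpleGraph V) (hnb : ∀ v : V, ∃ u : V, G.Adj v u)
    {k : ℕ} (κ : V → Fin k) (hκ : IsLinearColoring (nbrCpx G) κ) :
    ∀ x y : V, G.Adj x y → κ x ≠ κ y :=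
  stmt_19_general G κ hκ
end
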